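/- arXiv:1411.5994 — 5 statements merged into one kernel-verified Lean document; each statement's English description precedes it below -/
import Mathlib

section
/- Let M_1, ..., M_n be mutually unbiased bases of ℂ^d. Then the operator Σ_{x=1}^n |φ_x^{a(x)}⟩⟨φ_x^{a(x)}|, for any choice of outcomes a(x) ∈ {1,...,d}, has operator norm at most 1 + (n-1)/√d. -/
noncomputable section

/-- The rank-one operator `|v⟩⟨w|` on `ℂ^d`. -/
def outer {d : ℕ} (v w : EuclideanSpace ℂ (Fin d)) :
    EuclideanSpace ℂ (Fin d) →L[ℂ] EuclideanSpace ℂ (Fin d) :=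
  (innerSL ℂ w).smulRight v

/-- For mutually unbiased bases `φ x` of `ℂ^d` and any choice of outcomes `a x`,
the operator `∑ x, |φ x (a x)⟩⟨φ x (a x)|` has operator norm at most `1 + (n-1)/√d`. -/
theorem mub_projector_sum_norm_le (n d : ℕ)
    (φ : Fin n → Fin d → EuclideanSpace ℂ (Fin d))
    (horth : ∀ x, Orthonormal ℂ (φ x))
    (hspan : ∀ x, Submodule.span ℂ (Set.range (φ x)) = ⊤)
    (hmub : ∀ x y, x ≠ y → ∀ a b,
      ‖(inner ℂ (φ x a) (φ y b) : ℂ)‖ = 1 / Real.sqrt d)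
    (a : Fin n → Fin d) :
    ‖∑ x, outer (φ x (a x)) (φ x (a x))‖ ≤ 1 + ((n : ℝ) - 1) / Real.sqrt d := by
  set K : ℝ := 1 + ((n : ℝ) - 1) / Real.sqrt d with hKdef
  have hsd : (0:ℝ) ≤ Real.sqrt d := Real.sqrt_nonneg d
  set v : Fin n → EuclideanSpace ℂ (Fin d) := fun x => φ x (a x) with hv
  have hvnorm : ∀ x, ‖v x‖ = 1 := fun x => (horth x).1 (a x)
  have hvinner : ∀ x y, x ≠ y → ‖(inner ℂ (v x) (v y) : ℂ)‖ = 1 / Real.sqrt d :=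
    fun x y hxy => hmub x y hxy (a x) (a y)
  have hKnn : 0 ≤ K := by
    rcases eq_or_lt_of_le hsd with h | h
    · simp [hKdef, ← h]
    · have hd1 : (1:ℝ) ≤ Real.sqrt d := by
        have hd : 1 ≤ d := by
          by_contra hd
          push_neg at hd
          interval_cases d
          simp at h
        calc (1:ℝ) = Real.sqrt 1 := by simp
          _ ≤ Real.sqrt d := Real.sqrt_le_sqrt (by exact_mod_cast hd)
      have h1 : (-1:ℝ) ≤ ((n:ℝ) - 1) / Real.sqrt d := by
        rw [le_div_iff₀ h]
        have : (0:ℝ) ≤ (n:ℝ) := Nat.cast_nonneg n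
        nlinarith
      rw [hKdef]; linarith
  apply ContinuousLinearMap.opNorm_le_bound _ hKnn
  intro u
  set c : Fin n → ℂ := fun x => inner ℂ (v x) u with hc
  set s : ℝ := ∑ x, ‖c x‖ ^ 2 with hs
  have hsnn : 0 ≤ s := Finset.sum_nonneg fun x _ => sq_nonneg _
  set T : EuclideanSpace ℂ (Fin d) →L[ℂ] EuclideanSpace ℂ (Fin d) :=
    ∑ x, outer (v x) (v x) with hT
  have hTu : T u = ∑ x, c x • v x := by
    simp [hT, outer, ContinuousLinearMap.sum_apply, hc]
  -- s ≤ ‖u‖ * ‖T u‖ via Cauchy-Schwarz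
  have hinneru : (inner ℂ u (T u) : ℂ) = (s : ℂ) := by
    rw [hTu, inner_sum]
    push_cast [hs]
    apply Finset.sum_congr rfl
    intro x _
    rw [inner_smul_right, ← inner_conj_symm]
    exact_mod_cast RCLike.mul_conj (c x)
  have hsle : s ≤ ‖u‖ * ‖T u‖ := by
    calc s = ‖(inner ℂ u (T u) : ℂ)‖ := by rw [hinneru]; simp [abs_of_nonneg hsnn]
      _ ≤ ‖u‖ * ‖T u‖ := norm_inner_le_norm u (T u)
  -- ‖T u‖ ^ 2 ≤ K * s
  have hTusq : ‖T u‖ ^ 2 ≤ K * s := by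
    have hexp : ‖T u‖ ^ 2 = ‖(inner ℂ (T u) (T u) : ℂ)‖ := by
      rw [inner_self_eq_norm_sq_to_K]
      simp
    have hsum : (inner ℂ (T u) (T u) : ℂ)
        = ∑ x, ∑ y, (starRingEnd ℂ) (c x) * c y * inner ℂ (v x) (v y) := by
      rw [hTu, sum_inner]
      apply Finset.sum_congr rfl
      intro x _
      rw [inner_sum]
      apply Finset.sum_congr rfl
      intro y _
      rw [inner_smul_left, inner_smul_right]
      ring
    have hbound : ‖(inner ℂ (T u) (T u) : ℂ)‖
        ≤ ∑ x, ∑ y, ‖c x‖ * ‖c y‖ * ‖(inner ℂ (v x) (v y) : ℂ)‖ := by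
      rw [hsum]
      calc ‖∑ x, ∑ y, (starRingEnd ℂ) (c x) * c y * (inner ℂ (v x) (v y) : ℂ)‖
          ≤ ∑ x, ‖∑ y, (starRingEnd ℂ) (c x) * c y * (inner ℂ (v x) (v y) : ℂ)‖ :=
            norm_sum_le _ _
        _ ≤ ∑ x, ∑ y, ‖(starRingEnd ℂ) (c x) * c y * (inner ℂ (v x) (v y) : ℂ)‖ :=
            Finset.sum_le_sum fun x _ => norm_sum_le _ _
        _ = ∑ x, ∑ y, ‖c x‖ * ‖c y‖ * ‖(inner ℂ (v x) (v y) : ℂ)‖ := by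
            simp [norm_mul]
    have hterm : ∀ x y : Fin n, ‖c x‖ * ‖c y‖ * ‖(inner ℂ (v x) (v y) : ℂ)‖
        = ‖c x‖ * ‖c y‖ * (1 / Real.sqrt d)
          + (if x = y then ‖c x‖ ^ 2 - ‖c x‖ ^ 2 * (1 / Real.sqrt d) else 0) := by
      intro x y
      by_cases hxy : x = y
      · subst hxy
        have : (inner ℂ (v x) (v x) : ℂ) = (1:ℂ) := by
          rw [inner_self_eq_norm_sq_to_K, hvnorm x]; norm_num
        simp [this, hvnorm x]
        ring
      · rw [hvinner x y hxy]
        simp [hxy]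
    have hCS : (∑ x, ‖c x‖) ^ 2 ≤ (n : ℝ) * s := by
      have := sq_sum_le_card_mul_sum_sq (s := Finset.univ) (f := fun x : Fin n => ‖c x‖)
      simpa [hs] using this
    calc ‖T u‖ ^ 2 = ‖(inner ℂ (T u) (T u) : ℂ)‖ := hexp
      _ ≤ ∑ x, ∑ y, ‖c x‖ * ‖c y‖ * ‖(inner ℂ (v x) (v y) : ℂ)‖ := hbound
      _ = (∑ x, ‖c x‖) ^ 2 * (1 / Real.sqrt d) + (s - s * (1 / Real.sqrt d)) := by
          have hA : (∑ x, ‖c x‖) ^ 2 * (1 / Real.sqrt d)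
              = ∑ x, ∑ y, ‖c x‖ * ‖c y‖ * (1 / Real.sqrt d) := by
            rw [sq, Finset.sum_mul_sum]
            simp only [Finset.sum_mul]
          have hB : (∑ x : Fin n, ∑ y : Fin n,
                (if x = y then ‖c x‖ ^ 2 - ‖c x‖ ^ 2 * (1 / Real.sqrt d) else 0))
              = s - s * (1 / Real.sqrt d) := by
            simp only [Finset.sum_ite_eq, Finset.mem_univ, if_true, hs,
              Finset.sum_sub_distrib, ← Finset.sum_mul]
          simp only [hterm, Finset.sum_add_distrib, hA, hB]
      _ ≤ (n : ℝ) * s * (1 / Real.sqrt d) + (s - s * (1 / Real.sqrt d)) := by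
          have h1 : (0:ℝ) ≤ 1 / Real.sqrt d := by positivity
          nlinarith
      _ = K * s := by rw [hKdef]; field_simp; ring
  -- conclude
  rcases eq_or_lt_of_le (norm_nonneg (T u)) with h0 | h0
  · rw [← h0]; positivity
  · have : ‖T u‖ * ‖T u‖ ≤ (K * ‖u‖) * ‖T u‖ := by nlinarith
    exact le_of_mul_le_mul_right this h0
end
end

section
/- Let M_1, ..., M_n be MUBs of ℂ^d and F_x^a = |φ_x^a⟩⟨φ_x^a|. For any LHS assemblage σ_x^a = Σ_λ q_λ p_λ(a|x) σ_λ (with q_λ ≥ 0 summing to 1, p_λ(·|x) probability distributions, σ_λ density matrices), one has Σ_{x,a} Tr(F_x^a σ_x^a) ≤ (n/d)(1 + (d-1)/√n). -/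
noncomputable section

/-- The trace of a continuous linear operator on `ℂ^d`. -/
def trCLM {d : ℕ} (A : EuclideanSpace ℂ (Fin d) →L[ℂ] EuclideanSpace ℂ (Fin d)) : ℂ :=
  LinearMap.trace ℂ (EuclideanSpace ℂ (Fin d)) A.toLinearMap

namespace MubAux

open ComplexConjugate Finset

abbrev E (d : ℕ) := EuclideanSpace ℂ (Fin d)
abbrev F (d : ℕ) := EuclideanSpace ℂ (Fin d × Fin d)

variable {d : ℕ}

lemma decomp (v : E d) : v = ∑ j, v j • EuclideanSpace.single j (1:ℂ) := by
  ext i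
  rw [show ((∑ j, v j • EuclideanSpace.single j (1:ℂ)) i) = ∑ j, (v j • EuclideanSpace.single j (1:ℂ)) i from by rw [WithLp.ofLp_sum, Finset.sum_apply]]
  simp [EuclideanSpace.single_apply]

lemma trCLM_eq_sum (A : E d →L[ℂ] E d) :
    trCLM A = ∑ i, A (EuclideanSpace.single i (1:ℂ)) i := by
  rw [trCLM, LinearMap.trace_eq_matrix_trace ℂ (PiLp.basisFun 2 ℂ (Fin d))]
  rw [Matrix.trace]
  apply Finset.sum_congr rfl
  intro i _
  rw [Matrix.diag_apply, LinearMap.toMatrix_apply, PiLp.basisFun_repr, PiLp.basisFun_apply]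
  rfl


/-- entries of `|ψ⟩⟨ψ|` flattened as a vector in `ℂ^(d×d)`. -/
def pvec (ψ : E d) : F d := WithLp.toLp 2 (fun p : Fin d × Fin d => ψ p.1 * conj (ψ p.2))

/-- entries of an operator flattened as a vector. -/
def matv (A : E d →L[ℂ] E d) : F d :=
  WithLp.toLp 2 (fun p : Fin d × Fin d => A (EuclideanSpace.single p.2 (1:ℂ)) p.1)

/-- identity matrix as a vector. -/
def idv : F d := WithLp.toLp 2 (fun p : Fin d × Fin d => if p.1 = p.2 then 1 else 0)

lemma inner_F (f g : F d) :
    (inner ℂ f g : ℂ) = ∑ i, ∑ j, conj (f (i,j)) * g (i,j) := by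
  rw [PiLp.inner_apply, Fintype.sum_prod_type]
  simp [RCLike.inner_apply, mul_comm]

lemma inner_pvec_pvec (u v : E d) :
    (inner ℂ (pvec u) (pvec v) : ℂ) = (inner ℂ u v : ℂ) * (inner ℂ v u : ℂ) := by
  rw [inner_F, PiLp.inner_apply, PiLp.inner_apply]
  simp only [RCLike.inner_apply]
  rw [Finset.sum_mul_sum]
  apply Finset.sum_congr rfl; intro i _
  apply Finset.sum_congr rfl; intro j _
  simp only [pvec, map_mul, RingHomCompTriple.comp_apply, RingHom.id_apply, RCLike.star_def, starRingEnd_self_apply]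
  ring

lemma inner_pvec_idv (ψ : E d) :
    (inner ℂ (pvec ψ) (idv) : ℂ) = (inner ℂ ψ ψ : ℂ) := by
  rw [inner_F, PiLp.inner_apply]
  simp only [RCLike.inner_apply]
  rw [Finset.sum_congr rfl (fun i _ => Finset.sum_eq_single i
    (by intro j _ hj; simp [idv, pvec, (Ne.symm hj)]) (by simp))]
  simp [idv, pvec, mul_comm]

lemma inner_idv_pvec (ψ : E d) :
    (inner ℂ (idv) (pvec ψ) : ℂ) = (inner ℂ ψ ψ : ℂ) := by
  rw [inner_F, PiLp.inner_apply]
  simp only [RCLike.inner_apply]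
  rw [Finset.sum_congr rfl (fun i _ => Finset.sum_eq_single i
    (by intro j _ hj; simp [idv, pvec, (Ne.symm hj)]) (by simp))]
  simp [idv, pvec, mul_comm]

lemma inner_idv_idv : (inner ℂ (idv (d := d)) (idv (d := d)) : ℂ) = (d : ℂ) := by
  rw [inner_F]
  rw [Finset.sum_congr rfl (fun i _ => Finset.sum_eq_single i
    (by intro j _ hj; simp [idv, (Ne.symm hj)]) (by simp))]
  simp [idv]

lemma apply_eq_sum (A : E d →L[ℂ] E d) (v : E d) (i : Fin d) :
    A v i = ∑ j, v j * matv A (i, j) := by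
  conv_lhs => rw [decomp v, map_sum]
  rw [show ((∑ j, A (v j • EuclideanSpace.single j (1:ℂ))) i)
      = ∑ j, (A (v j • EuclideanSpace.single j (1:ℂ))) i from by rw [WithLp.ofLp_sum, Finset.sum_apply]]
  apply Finset.sum_congr rfl; intro j _
  rw [map_smul]
  rfl

lemma inner_pvec_matv (ψ : E d) (A : E d →L[ℂ] E d) :
    (inner ℂ (pvec ψ) (matv A) : ℂ) = (inner ℂ ψ (A ψ) : ℂ) := by
  rw [inner_F, PiLp.inner_apply]
  simp only [RCLike.inner_apply]
  apply Finset.sum_congr rfl; intro i _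
  rw [apply_eq_sum, Finset.sum_mul]
  apply Finset.sum_congr rfl; intro j _
  simp only [pvec, WithLp.ofLp_toLp, map_mul, RingHomCompTriple.comp_apply, RingHom.id_apply, RCLike.star_def, starRingEnd_self_apply]
  ring

lemma inner_idv_matv (A : E d →L[ℂ] E d) :
    (inner ℂ (idv) (matv A) : ℂ) = trCLM A := by
  rw [inner_F, trCLM_eq_sum]
  rw [Finset.sum_congr rfl (fun i _ => Finset.sum_eq_single i
    (by intro j _ hj; simp [idv, (Ne.symm hj)]) (by simp))]
  simp [idv, matv]


lemma matv_eq_inner (σ : E d →L[ℂ] E d) (i j : Fin d) :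
    matv σ (i, j) = (inner ℂ (EuclideanSpace.single i (1:ℂ)) (σ (EuclideanSpace.single j (1:ℂ))) : ℂ) := by
  simp [matv, EuclideanSpace.inner_single_left]

lemma entry_bound {σ : E d →L[ℂ] E d} (hpos : σ.IsPositive) (u v : E d) :
    ‖(inner ℂ u (σ v) : ℂ)‖ * ‖(inner ℂ v (σ u) : ℂ)‖
      ≤ (inner ℂ u (σ u) : ℂ).re * (inner ℂ v (σ v) : ℂ).re := by
  have hsymm := hpos.1
  have hnn : ∀ w : E d, 0 ≤ (inner ℂ w (σ w) : ℂ).re := by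
    intro w
    have h := hpos.inner_nonneg_right w
    exact hpos.re_inner_nonneg_right w
  set a := (inner ℂ u (σ u) : ℂ).re with ha
  set b := (inner ℂ v (σ v) : ℂ).re with hb
  set c := (inner ℂ u (σ v) : ℂ) with hcdef
  have hc' : (inner ℂ v (σ u) : ℂ) = conj c := by
    rw [← inner_conj_symm v (σ u)]
    congr 1
    exact hsymm u v
  have hbi : (inner ℂ v (σ v) : ℂ) = (b : ℂ) := by
    have hcs : conj (inner ℂ v (σ v) : ℂ) = (inner ℂ v (σ v) : ℂ) := by
      rw [inner_conj_symm (σ v) v]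
      exact hsymm v v
    exact (Complex.conj_eq_iff_re.mp hcs).symm
  have key : ∀ z : ℂ, 0 ≤ a + 2*(z*c).re + Complex.normSq z * b := by
    intro z
    have h0 := hnn (u + z • v)
    have hexp : (inner ℂ (u + z • v) (σ (u + z • v)) : ℂ)
        = inner ℂ u (σ u) + (z * c + (conj (z * c) + Complex.normSq z * (b:ℂ))) := by
      rw [map_add, map_smul, inner_add_left, inner_add_right, inner_add_right,
        inner_smul_left, inner_smul_right, inner_smul_left, inner_smul_right, hc', hbi,
        map_mul, Complex.normSq_eq_conj_mul_self]
      ring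
    rw [hexp] at h0
    simp only [Complex.add_re, Complex.conj_re, Complex.mul_re, Complex.ofReal_re,
      Complex.ofReal_im] at h0 ⊢
    linarith [h0, ha]
  rw [hc', RCLike.norm_conj]
  rcases eq_or_ne c 0 with hc0 | hc0
  · rw [hc0, norm_zero, mul_zero]
    exact mul_nonneg (hnn u) (hnn v)
  have hs : 0 < ‖c‖ := norm_pos_iff.mpr hc0
  have habsne : ‖c‖ ≠ 0 := by
    exact hs.ne'
  have hquad : ∀ t : ℝ, 0 ≤ b * (t * t) + (-(2*‖c‖)) * t + a := by
    intro t
    have h := key (((-t / ‖c‖ : ℝ) : ℂ) * conj c)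
    have habs : Complex.normSq c = ‖c‖^2 := by
      rw [Complex.normSq_eq_norm_sq]
    have h1 : ((((-t / ‖c‖ : ℝ) : ℂ) * conj c) * c).re = -t * ‖c‖ := by
      rw [mul_assoc, ← Complex.normSq_eq_conj_mul_self, ← Complex.ofReal_mul,
        Complex.ofReal_re, habs]
      field_simp [habsne]
    have h2 : Complex.normSq (((-t / ‖c‖ : ℝ) : ℂ) * conj c) = t^2 := by
      rw [Complex.normSq_mul, Complex.normSq_conj, Complex.normSq_ofReal, habs]
      field_simp [habsne]
    rw [h1, h2] at h
    nlinarith [h]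
  have hd := discrim_le_zero hquad
  rw [discrim] at hd
  nlinarith [hd, hs]
lemma matv_herm {σ : E d →L[ℂ] E d} (hpos : σ.IsPositive) (i j : Fin d) :
    matv σ (j, i) = conj (matv σ (i, j)) := by
  rw [matv_eq_inner, matv_eq_inner, ← inner_conj_symm]
  congr 1
  exact (hpos.1) _ _

lemma norm_matv_le {σ : E d →L[ℂ] E d} (hpos : σ.IsPositive) (htr : trCLM σ = 1) :
    ‖matv σ‖ ≤ 1 := by
  have hdiag : ∑ i, (matv σ (i, i)).re = 1 := by
    have h1 : (∑ i, σ (EuclideanSpace.single i (1:ℂ)) i) = 1 := by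
      rw [← trCLM_eq_sum]; exact htr
    have h2 : (∑ i, σ (EuclideanSpace.single i (1:ℂ)) i).re = 1 := by rw [h1]; rfl
    rw [Complex.re_sum] at h2
    exact h2
  have hsum : ∑ i, ∑ j, ‖matv σ (i, j)‖^2 ≤ 1 := by
    have hb : ∀ i j, ‖matv σ (i, j)‖^2 ≤ (matv σ (i, i)).re * (matv σ (j, j)).re := by
      intro i j
      have h := entry_bound hpos (EuclideanSpace.single i (1:ℂ)) (EuclideanSpace.single j (1:ℂ))
      rw [← matv_eq_inner, ← matv_eq_inner, ← matv_eq_inner, ← matv_eq_inner] at h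
      calc ‖matv σ (i, j)‖^2 = ‖matv σ (i, j)‖ * ‖matv σ (j, i)‖ := by
            rw [matv_herm hpos i j, RCLike.norm_conj]; ring
        _ ≤ _ := h
    calc ∑ i, ∑ j, ‖matv σ (i, j)‖^2
        ≤ ∑ i, ∑ j, (matv σ (i, i)).re * (matv σ (j, j)).re := by
          apply Finset.sum_le_sum; intro i _
          exact Finset.sum_le_sum fun j _ => hb i j
      _ = (∑ i, (matv σ (i, i)).re) * (∑ j, (matv σ (j, j)).re) := by
          rw [Finset.sum_mul_sum]
      _ = 1 := by rw [hdiag]; ring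
  rw [EuclideanSpace.norm_eq]
  refine Real.sqrt_le_one.mpr ?_
  rw [Fintype.sum_prod_type]
  exact hsum

lemma key {n : ℕ} (hd : 0 < d) (ψ : Fin n → E d)
    (hnorm : ∀ x, (inner ℂ (ψ x) (ψ x) : ℂ) = 1)
    (hcross : ∀ x y, x ≠ y → (inner ℂ (ψ x) (ψ y) : ℂ) * (inner ℂ (ψ y) (ψ x) : ℂ) = ((1/(d:ℝ) : ℝ) : ℂ))
    {σ : E d →L[ℂ] E d} (hpos : σ.IsPositive) (htr : trCLM σ = 1) :
    ∑ x, (inner ℂ (ψ x) (σ (ψ x)) : ℂ).re ≤ ((n : ℝ) - Real.sqrt n)/d + Real.sqrt n := by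
  set γ : ℝ := ((n : ℝ) - Real.sqrt n)/d with hγ
  set A : F d := ∑ x, pvec (ψ x) with hA
  set T : F d := A - (γ : ℂ) • idv with hT
  have hAS : (inner ℂ A (matv σ) : ℂ) = ∑ x, (inner ℂ (ψ x) (σ (ψ x)) : ℂ) := by
    rw [hA, sum_inner]
    exact Finset.sum_congr rfl fun x _ => inner_pvec_matv _ _
  have hTS : (inner ℂ T (matv σ) : ℂ) = (∑ x, (inner ℂ (ψ x) (σ (ψ x)) : ℂ)) - (γ:ℂ) := by
    rw [hT, inner_sub_left, inner_smul_left, inner_idv_matv, htr, hAS, Complex.conj_ofReal,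
      mul_one]
  have hAI : (inner ℂ A (idv (d := d)) : ℂ) = (n : ℂ) := by
    rw [hA, sum_inner]
    rw [Finset.sum_congr rfl fun x _ => (inner_pvec_idv (ψ x)).trans (hnorm x)]
    simp
  have hIA : (inner ℂ (idv (d := d)) A : ℂ) = (n : ℂ) := by
    rw [hA, inner_sum]
    rw [Finset.sum_congr rfl fun x _ => (inner_idv_pvec (ψ x)).trans (hnorm x)]
    simp
  have hAA : (inner ℂ A A : ℂ) = (n : ℂ) + (n : ℂ) * ((n-1 : ℕ) : ℂ) / (d : ℂ) := by
    rw [hA, sum_inner]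
    rw [Finset.sum_congr rfl fun x _ => inner_sum Finset.univ (fun y => pvec (ψ y)) (pvec (ψ x))]
    rw [Finset.sum_congr rfl fun x _ => Finset.sum_congr rfl fun y _ => inner_pvec_pvec (ψ x) (ψ y)]
    have hrow : ∀ x : Fin n, ∑ y, (inner ℂ (ψ x) (ψ y) : ℂ) * (inner ℂ (ψ y) (ψ x) : ℂ)
        = 1 + ((n-1 : ℕ) : ℂ) / (d : ℂ) := by
      intro x
      rw [← Finset.add_sum_erase _ _ (Finset.mem_univ x), hnorm x, mul_one]
      congr 1
      rw [Finset.sum_congr rfl fun y hy => hcross x y (Ne.symm (Finset.ne_of_mem_erase hy))]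
      rw [Finset.sum_const, Finset.card_erase_of_mem (Finset.mem_univ x), Finset.card_univ,
        Fintype.card_fin]
      push_cast
      ring
    rw [Finset.sum_congr rfl fun x _ => hrow x]
    rw [Finset.sum_const, Finset.card_univ, Fintype.card_fin]
    ring
  have hTTc : (inner ℂ T T : ℂ)
      = (((n : ℝ) + (n : ℝ) * ((n-1 : ℕ) : ℝ) / (d : ℝ) - 2*γ*(n:ℝ) + γ^2*(d:ℝ) : ℝ) : ℂ) := by
    rw [hT, inner_sub_sub_self, inner_smul_left, inner_smul_right, inner_smul_left,
      inner_smul_right, hAA, hAI, hIA, inner_idv_idv, Complex.conj_ofReal]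
    push_cast
    ring
  have hreal : (n : ℝ) + (n : ℝ) * ((n-1 : ℕ) : ℝ) / (d : ℝ) - 2*γ*(n:ℝ) + γ^2*(d:ℝ) = (n:ℝ) := by
    rcases Nat.eq_zero_or_pos n with hn0 | hn
    · subst hn0
      simp [hγ]
    · have hcast : ((n-1 : ℕ) : ℝ) = (n : ℝ) - 1 := by
        push_cast [Nat.cast_sub hn]
        ring
      have hsq : Real.sqrt n * Real.sqrt n = (n : ℝ) :=
        Real.mul_self_sqrt (Nat.cast_nonneg n)
      rw [hcast, hγ]
      have hdne : (d : ℝ) ≠ 0 := Nat.cast_ne_zero.mpr hd.ne'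
      field_simp
      nlinarith [hsq]
  have hnormT : ‖T‖ = Real.sqrt n := by
    have h2 : ‖T‖^2 = (n : ℝ) := by
      rw [@norm_sq_eq_re_inner ℂ]
      rw [show RCLike.re (inner ℂ T T : ℂ) = (inner ℂ T T : ℂ).re from rfl, hTTc, Complex.ofReal_re,
        hreal]
    rw [← Real.sqrt_sq (norm_nonneg T), h2]
  have hfinal : (∑ x, (inner ℂ (ψ x) (σ (ψ x)) : ℂ).re) - γ ≤ Real.sqrt n := by
    have e1 : (∑ x, (inner ℂ (ψ x) (σ (ψ x)) : ℂ).re) - γ = (inner ℂ T (matv σ) : ℂ).re := by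
      rw [hTS, Complex.sub_re, Complex.ofReal_re, Complex.re_sum]
    rw [e1]
    calc (inner ℂ T (matv σ) : ℂ).re ≤ |(inner ℂ T (matv σ) : ℂ).re| := le_abs_self _
      _ ≤ ‖(inner ℂ T (matv σ) : ℂ)‖ := Complex.abs_re_le_norm _
      _ ≤ ‖T‖ * ‖matv σ‖ := norm_inner_le_norm _ _
      _ ≤ Real.sqrt n * 1 := by
          rw [hnormT]
          exact mul_le_mul_of_nonneg_left (norm_matv_le hpos htr) (Real.sqrt_nonneg _)
      _ = Real.sqrt n := mul_one _
  linarith [hfinal]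

lemma trCLM_sum {ι : Type*} (s : Finset ι) (f : ι → (E d →L[ℂ] E d)) :
    trCLM (∑ i ∈ s, f i) = ∑ i ∈ s, trCLM (f i) := by
  unfold trCLM
  rw [ContinuousLinearMap.coe_sum, map_sum]

lemma trCLM_smul (c : ℂ) (A : E d →L[ℂ] E d) : trCLM (c • A) = c * trCLM A := by
  unfold trCLM
  rw [ContinuousLinearMap.coe_smul, map_smul, smul_eq_mul]

lemma trCLM_outer_mul (v w : E d) (B : E d →L[ℂ] E d) :
    trCLM (outer v w * B) = (inner ℂ w (B v) : ℂ) := by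
  rw [trCLM_eq_sum]
  have h1 : ∀ i : Fin d, (outer v w * B) (EuclideanSpace.single i (1:ℂ)) i
      = (inner ℂ w (B (EuclideanSpace.single i (1:ℂ))) : ℂ) * v i := by
    intro i
    rw [ContinuousLinearMap.mul_apply]
    show (((innerSL ℂ w).smulRight v) (B (EuclideanSpace.single i (1:ℂ)))) i = _
    rw [ContinuousLinearMap.smulRight_apply, PiLp.smul_apply, innerSL_apply_apply, smul_eq_mul]
  rw [Finset.sum_congr rfl fun i _ => h1 i]
  conv_rhs => rw [decomp v]
  rw [map_sum, inner_sum]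
  exact Finset.sum_congr rfl fun i _ => by rw [map_smul, inner_smul_right]; ring

end MubAux

open MubAux

/-- For MUBs `φ x` of `ℂ^d` with `F x a = |φ x a⟩⟨φ x a|` and any LHS assemblage
`σ x a = ∑ λ, q λ * p λ (a|x) • σl λ`, one has
`∑ x ∑ a Tr(F x a * σ x a) ≤ (n/d)(1 + (d-1)/√n)`. -/
theorem mub_lhs_bound_uncertainty (n d : ℕ)
    (φ : Fin n → Fin d → EuclideanSpace ℂ (Fin d))
    (horth : ∀ x, Orthonormal ℂ (φ x))
    (hspan : ∀ x, Submodule.span ℂ (Set.range (φ x)) = ⊤)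
    (hmub : ∀ x y, x ≠ y → ∀ a b,
      ‖(inner ℂ (φ x a) (φ y b) : ℂ)‖ = 1 / Real.sqrt d)
    (L : ℕ) (q : Fin L → ℝ) (hq : ∀ l, 0 ≤ q l) (hq1 : ∑ l, q l = 1)
    (p : Fin L → Fin n → Fin d → ℝ) (hp : ∀ l x a, 0 ≤ p l x a)
    (hp1 : ∀ l x, ∑ a, p l x a = 1)
    (σl : Fin L → EuclideanSpace ℂ (Fin d) →L[ℂ] EuclideanSpace ℂ (Fin d))
    (hσlpos : ∀ l, (σl l).IsPositive) (hσltr : ∀ l, trCLM (σl l) = 1) :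
    ∑ x, ∑ a, (trCLM (outer (φ x a) (φ x a) *
        (∑ l, ((q l * p l x a : ℝ) : ℂ) • σl l))).re ≤
      ((n : ℝ) / d) * (1 + ((d : ℝ) - 1) / Real.sqrt n) := by
  classical
  rcases Nat.eq_zero_or_pos d with hd0 | hd
  · subst hd0
    simp
  set t : Fin L → Fin n → Fin d → ℝ :=
    fun l x a => (inner ℂ (φ x a) (σl l (φ x a)) : ℂ).re with ht
  have hstep : ∀ x a, (trCLM (outer (φ x a) (φ x a) *
      (∑ l, ((q l * p l x a : ℝ) : ℂ) • σl l))).re = ∑ l, q l * p l x a * t l x a := by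
    intro x a
    rw [Finset.mul_sum]
    rw [show (∑ l, outer (φ x a) (φ x a) * (((q l * p l x a : ℝ) : ℂ) • σl l))
        = ∑ l, ((q l * p l x a : ℝ) : ℂ) • (outer (φ x a) (φ x a) * σl l) from
      Finset.sum_congr rfl fun l _ => mul_smul_comm _ _ _]
    rw [trCLM_sum]
    rw [Finset.sum_congr rfl fun l _ => trCLM_smul _ _]
    rw [Finset.sum_congr rfl fun l _ =>
      congrArg (fun z => ((q l * p l x a : ℝ) : ℂ) * z) (trCLM_outer_mul _ _ _)]
    rw [Complex.re_sum]
    exact Finset.sum_congr rfl fun l _ => by rw [Complex.re_ofReal_mul]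
  set C : ℝ := ((n : ℝ) - Real.sqrt n)/d + Real.sqrt n with hC
  have hbound : ∀ l : Fin L, ∑ x, ∑ a, p l x a * t l x a ≤ C := by
    intro l
    have hex : ∀ x : Fin n, ∃ b : Fin d, ∀ a : Fin d, t l x a ≤ t l x b := by
      intro x
      obtain ⟨b, _, hb⟩ := Finset.exists_max_image Finset.univ (t l x)
        ⟨⟨0, hd⟩, Finset.mem_univ _⟩
      exact ⟨b, fun a => hb a (Finset.mem_univ a)⟩
    choose g hg using hex
    have h1 : ∀ x, ∑ a, p l x a * t l x a ≤ t l x (g x) := by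
      intro x
      calc ∑ a, p l x a * t l x a ≤ ∑ a, p l x a * t l x (g x) :=
            Finset.sum_le_sum fun a _ => mul_le_mul_of_nonneg_left (hg x a) (hp l x a)
        _ = (∑ a, p l x a) * t l x (g x) := by rw [Finset.sum_mul]
        _ = t l x (g x) := by rw [hp1 l x, one_mul]
    have h2 : ∑ x, t l x (g x) ≤ C := by
      apply key hd (fun x => φ x (g x))
      · intro x
        rw [@inner_self_eq_norm_sq_to_K ℂ]
        rw [(horth x).1 (g x)]
        norm_num
      · intro x y hxy
        rw [← inner_conj_symm, ← Complex.normSq_eq_conj_mul_self]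
        rw [Complex.normSq_eq_norm_sq, hmub y x (Ne.symm hxy) (g y) (g x)]
        rw [div_pow, one_pow, Real.sq_sqrt (Nat.cast_nonneg d)]
      · exact hσlpos l
      · exact hσltr l
    calc ∑ x, ∑ a, p l x a * t l x a ≤ ∑ x, t l x (g x) :=
          Finset.sum_le_sum fun x _ => h1 x
      _ ≤ C := h2
  have hrearr : ∑ x, ∑ a, (trCLM (outer (φ x a) (φ x a) *
      (∑ l, ((q l * p l x a : ℝ) : ℂ) • σl l))).re
      = ∑ l, q l * (∑ x, ∑ a, p l x a * t l x a) := by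
    rw [Finset.sum_congr rfl fun x _ => Finset.sum_congr rfl fun a _ => hstep x a]
    rw [Finset.sum_congr rfl fun x (_ : x ∈ Finset.univ) =>
      Finset.sum_comm (s := Finset.univ) (t := Finset.univ)
        (f := fun a l => q l * p l x a * t l x a)]
    rw [Finset.sum_comm]
    apply Finset.sum_congr rfl
    intro l _
    rw [Finset.mul_sum]
    apply Finset.sum_congr rfl
    intro x _
    rw [Finset.mul_sum]
    apply Finset.sum_congr rfl
    intro a _
    ring
  rw [hrearr]
  have hCle : ∑ l, q l * (∑ x, ∑ a, p l x a * t l x a) ≤ C := by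
    calc ∑ l, q l * (∑ x, ∑ a, p l x a * t l x a) ≤ ∑ l, q l * C :=
          Finset.sum_le_sum fun l _ => mul_le_mul_of_nonneg_left (hbound l) (hq l)
      _ = (∑ l, q l) * C := by rw [Finset.sum_mul]
      _ = C := by rw [hq1, one_mul]
  refine hCle.trans ?_
  rw [hC]
  rcases Nat.eq_zero_or_pos n with hn0 | hn
  · subst hn0
    simp
  have hs : 0 < Real.sqrt n := Real.sqrt_pos.mpr (by positivity)
  have hsq : Real.sqrt n * Real.sqrt n = (n : ℝ) := Real.mul_self_sqrt (Nat.cast_nonneg n)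
  have hdne : (d : ℝ) ≠ 0 := Nat.cast_ne_zero.mpr hd.ne'
  have heq : ((n : ℝ) / d) * (1 + ((d : ℝ) - 1) / Real.sqrt n)
      = ((n : ℝ) - Real.sqrt n)/d + Real.sqrt n := by
    field_simp
    linear_combination (1 - (d:ℝ)) * hsq
  rw [heq]
end
end

section
/- Let M_1, ..., M_n be MUBs of ℂ^d and for each x, λ let p_λ(·|x) be a probability distribution on {1,...,d}. Set |ψ_{x,λ}^a⟩ = sqrt(p_λ(a|x)) |φ_x^a⟩. Then the operator norm of Σ_{x=1}^n Σ_{a=1}^d |ψ_{x,λ}^a⟩⟨ψ_{x,λ}^a| is at most 1 + (n+1)/√d. -/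
noncomputable section

lemma outer_apply {d : ℕ} (v w x : EuclideanSpace ℂ (Fin d)) :
    outer v w x = (inner ℂ w x : ℂ) • v := rfl

/-- Norm bound for a self-adjoint operator from a Rayleigh-quotient bound. -/
lemma selfAdjoint_norm_le {d : ℕ}
    (T : EuclideanSpace ℂ (Fin d) →L[ℂ] EuclideanSpace ℂ (Fin d))
    (hT : IsSelfAdjoint T) {C : ℝ} (hC : 0 ≤ C)
    (h : ∀ v : EuclideanSpace ℂ (Fin d), ‖v‖ = 1 → |(inner ℂ (T v) v : ℂ).re| ≤ C) :
    ‖T‖ ≤ C := by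
  have hSym : (T : EuclideanSpace ℂ (Fin d) →ₗ[ℂ] EuclideanSpace ℂ (Fin d)).IsSymmetric :=
    ContinuousLinearMap.isSelfAdjoint_iff_isSymmetric.mp hT
  have hn : Module.finrank ℂ (EuclideanSpace ℂ (Fin d)) = d := finrank_euclideanSpace_fin
  have hμ : ∀ i : Fin d, |hSym.eigenvalues hn i| ≤ C := by
    intro i
    have h1 : ‖hSym.eigenvectorBasis hn i‖ = 1 := (hSym.eigenvectorBasis hn).orthonormal.1 i
    have h2 := h (hSym.eigenvectorBasis hn i) h1
    have h3 : T (hSym.eigenvectorBasis hn i)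
        = (hSym.eigenvalues hn i : ℂ) • hSym.eigenvectorBasis hn i :=
      hSym.apply_eigenvectorBasis hn i
    rw [h3, inner_smul_left, inner_self_eq_norm_sq_to_K, h1] at h2
    simpa using h2
  refine T.opNorm_le_bound hC fun v => ?_
  have hTv : ‖T v‖ = ‖(hSym.eigenvectorBasis hn).repr (T v)‖ :=
    ((hSym.eigenvectorBasis hn).repr.norm_map _).symm
  have hvv : ‖v‖ = ‖(hSym.eigenvectorBasis hn).repr v‖ :=
    ((hSym.eigenvectorBasis hn).repr.norm_map _).symm
  rw [hTv, hvv, EuclideanSpace.norm_eq, EuclideanSpace.norm_eq,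
    ← Real.sqrt_sq hC, ← Real.sqrt_mul (sq_nonneg C)]
  apply Real.sqrt_le_sqrt
  rw [Finset.mul_sum]
  refine Finset.sum_le_sum fun i _ => ?_
  have hrep : (hSym.eigenvectorBasis hn).repr (T v) i
      = (hSym.eigenvalues hn i : ℂ) * (hSym.eigenvectorBasis hn).repr v i :=
    hSym.eigenvectorBasis_apply_self_apply hn v i
  rw [hrep, norm_mul, mul_pow]
  have h4 : ‖(hSym.eigenvalues hn i : ℂ)‖ = |hSym.eigenvalues hn i| := by
    rw [Complex.norm_real, Real.norm_eq_abs]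
  rw [h4]
  have := hμ i
  have h5 : |hSym.eigenvalues hn i| ^ 2 ≤ C ^ 2 := by
    apply sq_le_sq' <;> [linarith [abs_nonneg (hSym.eigenvalues hn i)]; exact this]
  exact mul_le_mul_of_nonneg_right h5 (sq_nonneg _)

lemma outer_inner_self {d : ℕ} (w v : EuclideanSpace ℂ (Fin d)) :
    (inner ℂ ((outer w w) v) v : ℂ) = ((‖(inner ℂ w v : ℂ)‖ ^ 2 : ℝ) : ℂ) := by
  rw [outer_apply, inner_smul_left, mul_comm, Complex.mul_conj]
  norm_cast
  simp [Complex.normSq_eq_norm_sq, ← Complex.ofReal_pow]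

/-- For MUBs `φ x` of `ℂ^d` and probability weights `p x a`, setting
`ψ x a = √(p x a) • φ x a`, the operator norm of `∑ x ∑ a |ψ x a⟩⟨ψ x a|` is at most
`1 + (n+1)/√d`. -/
theorem mub_weighted_sum_norm_le (n d : ℕ)
    (φ : Fin n → Fin d → EuclideanSpace ℂ (Fin d))
    (horth : ∀ x, Orthonormal ℂ (φ x))
    (hspan : ∀ x, Submodule.span ℂ (Set.range (φ x)) = ⊤)
    (hmub : ∀ x y, x ≠ y → ∀ a b,
      ‖(inner ℂ (φ x a) (φ y b) : ℂ)‖ = 1 / Real.sqrt d)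
    (p : Fin n → Fin d → ℝ) (hp : ∀ x a, 0 ≤ p x a) (hp1 : ∀ x, ∑ a, p x a = 1) :
    ‖∑ x, ∑ a, outer ((Real.sqrt (p x a) : ℂ) • φ x a)
        ((Real.sqrt (p x a) : ℂ) • φ x a)‖ ≤ 1 + ((n : ℝ) + 1) / Real.sqrt d := by
  classical
  set S := ∑ x, ∑ a, outer ((Real.sqrt (p x a) : ℂ) • φ x a)
      ((Real.sqrt (p x a) : ℂ) • φ x a) with hSdef
  have houter : ∀ u x y : EuclideanSpace ℂ (Fin d),
      (inner ℂ (outer u u x) y : ℂ) = inner ℂ x (outer u u y) := by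
    intro u x y
    rw [outer_apply, outer_apply, inner_smul_left, inner_smul_right, inner_conj_symm]
    ring
  have hS : IsSelfAdjoint S := by
    rw [ContinuousLinearMap.isSelfAdjoint_iff_isSymmetric]
    intro x y
    show (inner ℂ (S x) y : ℂ) = inner ℂ x (S y)
    rw [hSdef]
    simp only [ContinuousLinearMap.sum_apply, sum_inner, inner_sum]
    exact Finset.sum_congr rfl fun i _ => Finset.sum_congr rfl fun a _ => houter _ _ _
  have hC : (0:ℝ) ≤ 1 + ((n : ℝ) + 1) / Real.sqrt d := by positivity
  have hform : ∀ v : EuclideanSpace ℂ (Fin d),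
      (inner ℂ (S v) v : ℂ).re = ∑ x, ∑ a, p x a * ‖(inner ℂ (φ x a) v : ℂ)‖ ^ 2 := by
    intro v
    rw [hSdef]
    simp only [ContinuousLinearMap.sum_apply, sum_inner, Complex.re_sum]
    refine Finset.sum_congr rfl fun x _ => Finset.sum_congr rfl fun a _ => ?_
    rw [outer_inner_self, Complex.ofReal_re, inner_smul_left, norm_mul, mul_pow]
    rw [Complex.conj_ofReal]
    have : ‖((Real.sqrt (p x a) : ℂ))‖ = Real.sqrt (p x a) := by
      rw [Complex.norm_real, Real.norm_eq_abs, abs_of_nonneg (Real.sqrt_nonneg _)]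
    rw [this, Real.sq_sqrt (hp x a)]
  refine selfAdjoint_norm_le S hS hC fun v hv => ?_
  rw [hform v]
  rw [abs_of_nonneg (Finset.sum_nonneg fun x _ => Finset.sum_nonneg fun a _ =>
    mul_nonneg (hp x a) (sq_nonneg _))]
  -- d > 0 since a unit vector exists
  have hd : 0 < d := by
    rcases Nat.eq_zero_or_pos d with h0 | h0
    · exfalso
      subst h0
      have : v = 0 := by ext i; exact i.elim0
      rw [this, norm_zero] at hv; exact zero_ne_one hv
    · exact h0
  haveI : Nonempty (Fin d) := ⟨⟨0, hd⟩⟩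
  have hsd : 0 < Real.sqrt d := Real.sqrt_pos.mpr (by exact_mod_cast hd)
  -- choose maximizers
  have hmax : ∀ x, ∃ a, ∀ b, ‖(inner ℂ (φ x b) v : ℂ)‖ ≤ ‖(inner ℂ (φ x a) v : ℂ)‖ := by
    intro x
    obtain ⟨a, -, ha⟩ := Finset.exists_max_image Finset.univ
      (fun a => ‖(inner ℂ (φ x a) v : ℂ)‖) Finset.univ_nonempty
    exact ⟨a, fun b => ha b (Finset.mem_univ b)⟩
  choose f hf using hmax
  set t : Fin n → ℂ := fun x => inner ℂ (φ x (f x)) v with ht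
  set s : ℝ := ∑ x, ‖t x‖ ^ 2 with hs
  have hs0 : (0:ℝ) ≤ s := Finset.sum_nonneg fun x _ => sq_nonneg _
  have hA : ∑ x, ∑ a, p x a * ‖(inner ℂ (φ x a) v : ℂ)‖ ^ 2 ≤ s := by
    refine Finset.sum_le_sum fun x _ => ?_
    calc ∑ a, p x a * ‖(inner ℂ (φ x a) v : ℂ)‖ ^ 2
        ≤ ∑ a, p x a * ‖t x‖ ^ 2 := by
          refine Finset.sum_le_sum fun a _ => mul_le_mul_of_nonneg_left ?_ (hp x a)
          exact pow_le_pow_left₀ (norm_nonneg _) (hf x a) 2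
      _ = ‖t x‖ ^ 2 := by rw [← Finset.sum_mul, hp1 x, one_mul]
  set w : EuclideanSpace ℂ (Fin d) := ∑ x, t x • φ x (f x) with hw
  have hvw : (inner ℂ v w : ℂ).re = s := by
    rw [hw, inner_sum, Complex.re_sum]
    refine Finset.sum_congr rfl fun x _ => ?_
    have htc : (inner ℂ v (φ x (f x)) : ℂ) = starRingEnd ℂ (t x) :=
      (inner_conj_symm v (φ x (f x))).symm
    rw [inner_smul_right, htc, Complex.mul_conj]
    simp [Complex.normSq_eq_norm_sq, ← Complex.ofReal_pow]
  have hsw : s ≤ ‖w‖ := by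
    calc s = (inner ℂ v w : ℂ).re := hvw.symm
      _ ≤ ‖(inner ℂ v w : ℂ)‖ := Complex.re_le_norm _
      _ ≤ ‖v‖ * ‖w‖ := norm_inner_le_norm _ _
      _ = ‖w‖ := by rw [hv, one_mul]
  have hww : ‖w‖ ^ 2 ≤ s * (1 + (n : ℝ) / Real.sqrt d) := by
    have h1 : ‖w‖ ^ 2 = (inner ℂ w w : ℂ).re := by
      simpa using (inner_self_eq_norm_sq (𝕜 := ℂ) w).symm
    have row : ∀ x : Fin n, (inner ℂ (t x • φ x (f x)) w : ℂ).re
        ≤ ‖t x‖ ^ 2 + ((n : ℝ) * ‖t x‖ ^ 2 + s) / (2 * Real.sqrt d) := by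
      intro x
      rw [hw, inner_sum, Complex.re_sum,
        ← Finset.add_sum_erase _ _ (Finset.mem_univ x)]
      have hdiag : (inner ℂ (t x • φ x (f x)) (t x • φ x (f x)) : ℂ).re = ‖t x‖ ^ 2 := by
        rw [inner_smul_left, inner_smul_right, inner_self_eq_norm_sq_to_K,
          (horth x).1 (f x)]
        simp [Complex.mul_conj, Complex.normSq_eq_norm_sq, ← Complex.ofReal_pow, mul_comm]
      have hoff : ∀ y ∈ Finset.univ.erase x,
          (inner ℂ (t x • φ x (f x)) (t y • φ y (f y)) : ℂ).re
            ≤ (‖t x‖ ^ 2 + ‖t y‖ ^ 2) / (2 * Real.sqrt d) := by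
        intro y hy
        have hxy : x ≠ y := (Finset.ne_of_mem_erase hy).symm
        have hb : (inner ℂ (t x • φ x (f x)) (t y • φ y (f y)) : ℂ).re
            ≤ ‖t x‖ * ‖t y‖ * (1 / Real.sqrt d) := by
          calc (inner ℂ (t x • φ x (f x)) (t y • φ y (f y)) : ℂ).re
              ≤ ‖(inner ℂ (t x • φ x (f x)) (t y • φ y (f y)) : ℂ)‖ := Complex.re_le_norm _
            _ = ‖t x‖ * ‖t y‖ * ‖(inner ℂ (φ x (f x)) (φ y (f y)) : ℂ)‖ := by
                rw [inner_smul_left, inner_smul_right, norm_mul, norm_mul]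
                simp [mul_assoc, mul_comm, mul_left_comm]
            _ = ‖t x‖ * ‖t y‖ * (1 / Real.sqrt d) := by
                rw [hmub x y hxy (f x) (f y)]
        refine hb.trans ?_
        rw [le_div_iff₀ (by positivity : (0:ℝ) < 2 * Real.sqrt d)]
        have he : ‖t x‖ * ‖t y‖ * (1 / Real.sqrt d) * (2 * Real.sqrt d)
            = 2 * (‖t x‖ * ‖t y‖) := by
          field_simp
        rw [he]
        nlinarith [sq_nonneg (‖t x‖ - ‖t y‖)]
      calc (inner ℂ (t x • φ x (f x)) (t x • φ x (f x)) : ℂ).re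
            + ∑ y ∈ Finset.univ.erase x, (inner ℂ (t x • φ x (f x)) (t y • φ y (f y)) : ℂ).re
          ≤ ‖t x‖ ^ 2 + ∑ y ∈ Finset.univ.erase x,
              (‖t x‖ ^ 2 + ‖t y‖ ^ 2) / (2 * Real.sqrt d) := by
            rw [hdiag]
            exact add_le_add_right (Finset.sum_le_sum hoff) _
        _ ≤ ‖t x‖ ^ 2 + ∑ y, (‖t x‖ ^ 2 + ‖t y‖ ^ 2) / (2 * Real.sqrt d) := by
            refine add_le_add_right (Finset.sum_le_sum_of_subset_of_nonneg
              (Finset.erase_subset _ _) fun y _ _ => by positivity) _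
        _ = ‖t x‖ ^ 2 + ((n : ℝ) * ‖t x‖ ^ 2 + s) / (2 * Real.sqrt d) := by
            rw [← Finset.sum_div]
            congr 2
            rw [Finset.sum_add_distrib, Finset.sum_const, Finset.card_univ,
              Fintype.card_fin, nsmul_eq_mul, hs]
    calc ‖w‖ ^ 2 = (inner ℂ w w : ℂ).re := h1
      _ = ∑ x, (inner ℂ (t x • φ x (f x)) w : ℂ).re := by
          rw [hw, sum_inner, Complex.re_sum]
      _ ≤ ∑ x, (‖t x‖ ^ 2 + ((n : ℝ) * ‖t x‖ ^ 2 + s) / (2 * Real.sqrt d)) :=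
          Finset.sum_le_sum fun x _ => row x
      _ = s * (1 + (n : ℝ) / Real.sqrt d) := by
          rw [Finset.sum_add_distrib, ← Finset.sum_div, Finset.sum_add_distrib,
            ← Finset.mul_sum, Finset.sum_const, Finset.card_univ, Fintype.card_fin,
            nsmul_eq_mul, ← hs]
          field_simp
          ring
  have hsle : s ≤ 1 + (n : ℝ) / Real.sqrt d := by
    rcases eq_or_lt_of_le hs0 with h0 | h0
    · rw [← h0]; positivity
    · have h2 : s * s ≤ s * (1 + (n : ℝ) / Real.sqrt d) := by
        calc s * s ≤ ‖w‖ * ‖w‖ := mul_le_mul hsw hsw hs0 (norm_nonneg _)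
          _ = ‖w‖ ^ 2 := (sq ‖w‖).symm
          _ ≤ s * (1 + (n : ℝ) / Real.sqrt d) := hww
      exact le_of_mul_le_mul_left h2 h0
  calc ∑ x, ∑ a, p x a * ‖(inner ℂ (φ x a) v : ℂ)‖ ^ 2 ≤ s := hA
    _ ≤ 1 + (n : ℝ) / Real.sqrt d := hsle
    _ ≤ 1 + ((n : ℝ) + 1) / Real.sqrt d := by gcongr; linarith
end
end

section
/- Let F be the steering functional defined by n MUBs in ℂ^d, i.e., F_x^a = |φ_x^a⟩⟨φ_x^a|. Then the LHS bound S_LHS(F) = sup over LHS assemblages σ of |Σ_{x,a} Tr(F_x^a σ_x^a)| satisfies S_LHS(F) ≤ 1 + (n+1)/√d. -/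
noncomputable section

lemma trace_eq_sum_inner {d : ℕ} (b : OrthonormalBasis (Fin d) ℂ (EuclideanSpace ℂ (Fin d)))
    (f : EuclideanSpace ℂ (Fin d) →ₗ[ℂ] EuclideanSpace ℂ (Fin d)) :
    LinearMap.trace ℂ (EuclideanSpace ℂ (Fin d)) f = ∑ i, (inner ℂ (b i) (f (b i)) : ℂ) := by
  rw [LinearMap.trace_eq_matrix_trace ℂ b.toBasis, Matrix.trace]
  congr 1
  ext i
  rw [Matrix.diag_apply, LinearMap.toMatrix_apply, b.coe_toBasis_repr_apply,
    b.repr_apply_apply, b.coe_toBasis]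

lemma tr_outer_mul {d : ℕ} (v w : EuclideanSpace ℂ (Fin d))
    (A : EuclideanSpace ℂ (Fin d) →L[ℂ] EuclideanSpace ℂ (Fin d)) :
    trCLM (outer v w * A) = inner ℂ w (A v) := by
  classical
  set b := EuclideanSpace.basisFun (Fin d) ℂ
  have h : trCLM (outer v w * A) = ∑ i, (inner ℂ (b i) ((outer v w) (A (b i))) : ℂ) := by
    rw [trCLM, trace_eq_sum_inner b]; rfl
  rw [h]
  have hb : ∀ i, (inner ℂ (b i) ((outer v w) (A (b i))) : ℂ)
      = (inner ℂ w (A (b i)) : ℂ) * inner ℂ (b i) v := by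
    intro i
    simp [outer, inner_smul_right]
  simp_rw [hb]
  have h2 : (inner ℂ w (A v) : ℂ) = inner ℂ w (A (∑ i, (inner ℂ (b i) v : ℂ) • b i)) := by
    rw [b.sum_repr' v]
  rw [h2, map_sum, inner_sum]
  simp_rw [map_smul, inner_smul_right]
  exact Finset.sum_congr rfl fun i _ => (mul_comm _ _)


-- spectral decomposition facts for a positive trace-one operator
lemma spectral_facts {d : ℕ} (T : EuclideanSpace ℂ (Fin d) →L[ℂ] EuclideanSpace ℂ (Fin d))
    (hTpos : T.IsPositive) (hTtr : trCLM T = 1) :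
    ∃ (e : OrthonormalBasis (Fin d) ℂ (EuclideanSpace ℂ (Fin d))) (μ : Fin d → ℝ),
      (∀ i, 0 ≤ μ i) ∧ (∑ i, μ i = 1) ∧
      (∀ u : EuclideanSpace ℂ (Fin d),
        ((inner ℂ u (T u) : ℂ)).re = ∑ i, μ i * ‖(inner ℂ (e i) u : ℂ)‖ ^ 2) := by
  classical
  have hsym : T.toLinearMap.IsSymmetric :=
    hTpos.1
  have hrank : Module.finrank ℂ (EuclideanSpace ℂ (Fin d)) = d := finrank_euclideanSpace_fin
  set e := hsym.eigenvectorBasis hrank with he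
  set μ := hsym.eigenvalues hrank with hμ
  have happly : ∀ i, T (e i) = (μ i : ℂ) • e i := fun i => hsym.apply_eigenvectorBasis hrank i
  have hei : ∀ i, (inner ℂ (e i) (e i) : ℂ) = 1 := by
    intro i
    rw [inner_self_eq_norm_sq_to_K, e.orthonormal.1 i]
    norm_num
  refine ⟨e, μ, ?_, ?_, ?_⟩
  · intro i
    have h := hTpos.inner_nonneg_right (e i)
    rw [happly i, inner_smul_right, hei i, mul_one] at h
    simpa using h
  · have htr : trCLM T = ∑ i, ((μ i : ℂ)) := by
      rw [trCLM, trace_eq_sum_inner e]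
      refine Finset.sum_congr rfl fun i _ => ?_
      rw [ContinuousLinearMap.coe_coe, happly i, inner_smul_right, hei i, mul_one]
    rw [htr] at hTtr
    have : ((∑ i, μ i : ℝ) : ℂ) = ((1 : ℝ) : ℂ) := by push_cast; simpa using hTtr
    exact_mod_cast this
  · intro u
    have hTu : T u = ∑ i, (inner ℂ (e i) u : ℂ) • ((μ i : ℂ) • e i) := by
      conv_lhs => rw [← e.sum_repr' u]
      rw [map_sum]
      refine Finset.sum_congr rfl fun i _ => ?_
      rw [map_smul, happly i]
    have : (inner ℂ u (T u) : ℂ) = ((∑ i, μ i * ‖(inner ℂ (e i) u : ℂ)‖ ^ 2 : ℝ) : ℂ) := by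
      rw [hTu, inner_sum]
      push_cast
      refine Finset.sum_congr rfl fun i _ => ?_
      rw [inner_smul_right, inner_smul_right, ← inner_conj_symm u (e i)]
      calc (inner ℂ (e i) u : ℂ) * ((μ i : ℂ) * (starRingEnd ℂ) (inner ℂ (e i) u))
          = (μ i : ℂ) * ((inner ℂ (e i) u : ℂ) * (starRingEnd ℂ) (inner ℂ (e i) u)) := by ring
        _ = _ := by
              rw [RCLike.mul_conj]
              norm_num
    rw [this]
    exact Complex.ofReal_re _

set_option maxHeartbeats 1600000 in
open Finset in
lemma pure_bound {n d : ℕ} (φ : Fin n → Fin d → EuclideanSpace ℂ (Fin d))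
    (horth : ∀ x, Orthonormal ℂ (φ x))
    (hmub : ∀ x y, x ≠ y → ∀ a b,
      ‖(inner ℂ (φ x a) (φ y b) : ℂ)‖ = 1 / Real.sqrt d)
    (p : Fin n → Fin d → ℝ) (hp : ∀ x a, 0 ≤ p x a) (hp1 : ∀ x, ∑ a, p x a = 1)
    (ψ : EuclideanSpace ℂ (Fin d)) (hψ : ‖ψ‖ = 1) :
    ∑ x, ∑ a, p x a * ‖(inner ℂ ψ (φ x a) : ℂ)‖ ^ 2 ≤ 1 + (n : ℝ) / Real.sqrt d := by
  classical
  set s : Fin n → Fin d → ℂ := fun x a => inner ℂ ψ (φ x a) with hs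
  set c : Fin n → Fin d → ℂ := fun x a => (p x a : ℂ) * (starRingEnd ℂ) (s x a) with hc
  set v : EuclideanSpace ℂ (Fin d) := ∑ x, ∑ a, c x a • φ x a with hv
  set C : ℝ := ∑ x, ∑ a, p x a * ‖s x a‖ ^ 2 with hC
  have hsd : 0 ≤ (1:ℝ) / Real.sqrt d := by positivity
  have hC0 : 0 ≤ C := by
    apply Finset.sum_nonneg; intro x _; apply Finset.sum_nonneg; intro a _
    exact mul_nonneg (hp x a) (by positivity)
  -- inner ℂ ψ v = C
  have hinner : (inner ℂ ψ v : ℂ) = (C : ℂ) := by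
    rw [hv, inner_sum]
    push_cast [hC]
    refine Finset.sum_congr rfl fun x _ => ?_
    rw [inner_sum]
    refine Finset.sum_congr rfl fun a _ => ?_
    rw [inner_smul_right, hc]
    have : ((starRingEnd ℂ) (s x a)) * (inner ℂ ψ (φ x a) : ℂ) = ((‖s x a‖ ^ 2 : ℝ) : ℂ) := by
      have := RCLike.conj_mul (s x a)
      simpa [hs] using this
    rw [mul_assoc, this]
    push_cast
    ring
  -- C ≤ ‖v‖
  have hCv : C ≤ ‖v‖ := by
    have h1 : ‖(inner ℂ ψ v : ℂ)‖ ≤ ‖ψ‖ * ‖v‖ := norm_inner_le_norm ψ v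
    rw [hinner, hψ, one_mul] at h1
    rwa [Complex.norm_real, Real.norm_eq_abs, abs_of_nonneg hC0] at h1
  -- norm bound on v
  set w : Fin n → EuclideanSpace ℂ (Fin d) := fun x => ∑ a, c x a • φ x a with hw
  have hvw : v = ∑ x, w x := by rw [hv]
  have hcnorm : ∀ x a, ‖c x a‖ = p x a * ‖s x a‖ := by
    intro x a
    rw [hc]
    simp only [norm_mul, RCLike.norm_conj, Complex.norm_real, Real.norm_eq_abs,
      abs_of_nonneg (hp x a)]
  have hple : ∀ x a, p x a ≤ 1 := by
    intro x a
    calc p x a ≤ ∑ b, p x b := Finset.single_le_sum (fun b _ => hp x b) (Finset.mem_univ a)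
    _ = 1 := hp1 x
  set A : Fin n → ℝ := fun x => ∑ a, ‖c x a‖ with hA
  have hA0 : ∀ x, 0 ≤ A x := fun x => Finset.sum_nonneg fun a _ => norm_nonneg _
  set Cx : Fin n → ℝ := fun x => ∑ a, p x a * ‖s x a‖ ^ 2 with hCx
  have hCCx : C = ∑ x, Cx x := rfl
  have hCx0 : ∀ x, 0 ≤ Cx x :=
    fun x => Finset.sum_nonneg fun a _ => mul_nonneg (hp x a) (by positivity)
  -- diagonal
  have hdiag : ∀ x, ‖(inner ℂ (w x) (w x) : ℂ)‖ ≤ Cx x := by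
    intro x
    have h4 : (inner ℂ (w x) (w x) : ℂ) = ∑ a, (starRingEnd ℂ) (c x a) * c x a := by
      rw [hw]
      simp only [sum_inner]
      simp [sum_inner, inner_sum, inner_smul_left, inner_smul_right,
        orthonormal_iff_ite.mp (horth x), mul_ite, Finset.mul_sum]
      exact Finset.sum_congr rfl fun a _ => mul_comm _ _
    have h5 : ∀ a, (starRingEnd ℂ) (c x a) * c x a = ((‖c x a‖ ^ 2 : ℝ) : ℂ) := by
      intro a
      have := RCLike.conj_mul (c x a)
      simpa using this
    have : (inner ℂ (w x) (w x) : ℂ) = ((∑ a, ‖c x a‖ ^ 2 : ℝ) : ℂ) := by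
      rw [h4]
      simp_rw [h5]
      push_cast
      rfl
    rw [this, Complex.norm_real, Real.norm_eq_abs,
      abs_of_nonneg (Finset.sum_nonneg fun a _ => sq_nonneg _)]
    refine Finset.sum_le_sum fun a _ => ?_
    rw [hcnorm, mul_pow]
    calc p x a ^ 2 * ‖s x a‖ ^ 2 ≤ p x a * 1 * ‖s x a‖ ^ 2 := by
          refine mul_le_mul_of_nonneg_right ?_ (by positivity)
          rw [sq]
          exact mul_le_mul_of_nonneg_left (hple x a) (hp x a)
    _ = p x a * ‖s x a‖ ^ 2 := by ring
  -- off-diagonal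
  have hoff : ∀ x y, x ≠ y → ‖(inner ℂ (w x) (w y) : ℂ)‖ ≤ 1 / Real.sqrt d * (A x * A y) := by
    intro x y hxy
    have h1 : ‖(inner ℂ (w x) (w y) : ℂ)‖ ≤
        ∑ a, ∑ b, ‖c x a‖ * ‖c y b‖ * (1 / Real.sqrt d) := by
      rw [hw]
      simp only [sum_inner]
      refine (norm_sum_le _ _).trans (Finset.sum_le_sum fun a _ => ?_)
      simp only [inner_sum]
      refine (norm_sum_le _ _).trans (Finset.sum_le_sum fun b _ => ?_)
      rw [inner_smul_left, inner_smul_right, norm_mul, norm_mul, RCLike.norm_conj,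
        hmub x y hxy a b, mul_assoc]
    have key : ∀ (f g : Fin d → ℝ) (k : ℝ),
        ∑ a, ∑ b, f a * g b * k = k * ((∑ a, f a) * (∑ b, g b)) := by
      intro f g k
      rw [Finset.sum_mul_sum, Finset.mul_sum]
      refine Finset.sum_congr rfl fun a _ => ?_
      rw [Finset.mul_sum]
      exact Finset.sum_congr rfl fun b _ => by ring
    exact h1.trans (le_of_eq (key _ _ _))
  -- Cauchy-Schwarz bounds
  have hAx2 : ∀ x, A x ^ 2 ≤ Cx x := by
    intro x
    have := Finset.sum_mul_sq_le_sq_mul_sq Finset.univ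
      (fun a => Real.sqrt (p x a)) (fun a => Real.sqrt (p x a) * ‖s x a‖)
    have e1 : ∀ a, Real.sqrt (p x a) * (Real.sqrt (p x a) * ‖s x a‖) = ‖c x a‖ := by
      intro a
      rw [hcnorm, ← mul_assoc, Real.mul_self_sqrt (hp x a)]
    have e2 : ∀ a, Real.sqrt (p x a) ^ 2 = p x a := fun a => Real.sq_sqrt (hp x a)
    have e3 : ∀ a, (Real.sqrt (p x a) * ‖s x a‖) ^ 2 = p x a * ‖s x a‖ ^ 2 := by
      intro a; rw [mul_pow, e2]
    simp only [e1, e2, e3] at this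
    rw [hp1 x, one_mul] at this
    exact this
  have hsumA : (∑ x, A x) ^ 2 ≤ n * C := by
    calc (∑ x, A x) ^ 2 ≤ ((Finset.univ : Finset (Fin n)).card : ℝ) * ∑ x, A x ^ 2 :=
          sq_sum_le_card_mul_sum_sq (s := (Finset.univ : Finset (Fin n))) (f := A)
    _ ≤ n * C := by
        rw [Finset.card_univ, Fintype.card_fin, hCCx]
        exact mul_le_mul_of_nonneg_left (Finset.sum_le_sum fun x _ => hAx2 x)
          (Nat.cast_nonneg n)
  -- assemble: ‖v‖² ≤ C + (1/√d) * (n * C)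
  have hnormv : ‖v‖ ^ 2 ≤ C + 1 / Real.sqrt d * (n * C) := by
    have h0 : (‖v‖ : ℝ) ^ 2 = ‖(inner ℂ v v : ℂ)‖ := by
      rw [inner_self_eq_norm_sq_to_K]
      rw [norm_pow]
      simp [abs_of_nonneg (norm_nonneg v)]
    have h1 : (inner ℂ v v : ℂ) = ∑ x, ∑ y, (inner ℂ (w x) (w y) : ℂ) := by
      rw [hvw, sum_inner]
      exact Finset.sum_congr rfl fun x _ => by rw [inner_sum]
    have h2 : ‖(inner ℂ v v : ℂ)‖ ≤ ∑ x, ∑ y, ‖(inner ℂ (w x) (w y) : ℂ)‖ := by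
      rw [h1]
      exact (norm_sum_le _ _).trans (Finset.sum_le_sum fun x _ => norm_sum_le _ _)
    rw [h0]
    refine h2.trans ?_
    have h3 : ∀ x : Fin n, ∑ y, ‖(inner ℂ (w x) (w y) : ℂ)‖ ≤
        Cx x + 1 / Real.sqrt d * (A x * ∑ y, A y) := by
      intro x
      rw [← Finset.add_sum_erase _ _ (Finset.mem_univ x)]
      refine add_le_add (hdiag x) ?_
      calc ∑ y ∈ Finset.univ.erase x, ‖(inner ℂ (w x) (w y) : ℂ)‖
          ≤ ∑ y ∈ Finset.univ.erase x, 1 / Real.sqrt d * (A x * A y) :=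
            Finset.sum_le_sum fun y hy => hoff x y (Ne.symm (Finset.ne_of_mem_erase hy))
        _ ≤ ∑ y, 1 / Real.sqrt d * (A x * A y) :=
            Finset.sum_le_sum_of_subset_of_nonneg (Finset.subset_univ _)
              (fun y _ _ => mul_nonneg hsd (mul_nonneg (hA0 x) (hA0 y)))
        _ = 1 / Real.sqrt d * (A x * ∑ y, A y) := by
            rw [← Finset.mul_sum, ← Finset.mul_sum]
    refine (Finset.sum_le_sum fun x _ => h3 x).trans ?_
    rw [Finset.sum_add_distrib, ← hCCx]
    refine add_le_add le_rfl ?_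
    rw [← Finset.mul_sum, ← Finset.sum_mul, ← sq]
    exact mul_le_mul_of_nonneg_left hsumA hsd
  -- conclude
  by_cases hCz : C = 0
  · rw [hCz]; positivity
  · have hCpos : 0 < C := lt_of_le_of_ne hC0 (Ne.symm hCz)
    have : C * C ≤ C * (1 + (n : ℝ) / Real.sqrt d) := by
      calc C * C ≤ ‖v‖ * ‖v‖ := mul_le_mul hCv hCv hC0 (norm_nonneg v)
      _ = ‖v‖ ^ 2 := (sq ‖v‖).symm
      _ ≤ C + 1 / Real.sqrt d * (n * C) := hnormv
      _ = C * (1 + (n : ℝ) / Real.sqrt d) := by ring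
    exact le_of_mul_le_mul_left this hCpos

lemma mixed_bound {n d : ℕ} (φ : Fin n → Fin d → EuclideanSpace ℂ (Fin d))
    (horth : ∀ x, Orthonormal ℂ (φ x))
    (hmub : ∀ x y, x ≠ y → ∀ a b,
      ‖(inner ℂ (φ x a) (φ y b) : ℂ)‖ = 1 / Real.sqrt d)
    (p : Fin n → Fin d → ℝ) (hp : ∀ x a, 0 ≤ p x a) (hp1 : ∀ x, ∑ a, p x a = 1)
    (T : EuclideanSpace ℂ (Fin d) →L[ℂ] EuclideanSpace ℂ (Fin d))
    (hTpos : T.IsPositive) (hTtr : trCLM T = 1) :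
    ∑ x, ∑ a, p x a * ((inner ℂ (φ x a) (T (φ x a)) : ℂ)).re ≤ 1 + (n : ℝ) / Real.sqrt d := by
  obtain ⟨e, μ, hμ0, hμ1, hexp⟩ := spectral_facts T hTpos hTtr
  calc ∑ x, ∑ a, p x a * ((inner ℂ (φ x a) (T (φ x a)) : ℂ)).re
      = ∑ i, μ i * (∑ x, ∑ a, p x a * ‖(inner ℂ (e i) (φ x a) : ℂ)‖ ^ 2) := by
        simp_rw [hexp, Finset.mul_sum]
        have h1 : ∀ x : Fin n,
            ∑ a, ∑ i, p x a * (μ i * ‖(inner ℂ (e i) (φ x a) : ℂ)‖ ^ 2)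
            = ∑ i, ∑ a, μ i * (p x a * ‖(inner ℂ (e i) (φ x a) : ℂ)‖ ^ 2) := by
          intro x
          rw [Finset.sum_comm]
          exact Finset.sum_congr rfl fun i _ => Finset.sum_congr rfl fun a _ => by ring
        simp_rw [h1]
        rw [Finset.sum_comm]
    _ ≤ ∑ i, μ i * (1 + (n : ℝ) / Real.sqrt d) := by
        refine Finset.sum_le_sum fun i _ => ?_
        exact mul_le_mul_of_nonneg_left
          (pure_bound φ horth hmub p hp hp1 (e i) (e.orthonormal.1 i)) (hμ0 i)
    _ = 1 + (n : ℝ) / Real.sqrt d := by rw [← Finset.sum_mul, hμ1, one_mul]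

set_option maxHeartbeats 1600000 in
/-- For the steering functional `F x a = |φ x a⟩⟨φ x a|` built from `n` MUBs of `ℂ^d`, the value
of `F` on any LHS assemblage is bounded in modulus by `1 + (n+1)/√d`; hence
`S_LHS(F) ≤ 1 + (n+1)/√d`. -/
theorem mub_lhs_bound (n d : ℕ)
    (φ : Fin n → Fin d → EuclideanSpace ℂ (Fin d))
    (horth : ∀ x, Orthonormal ℂ (φ x))
    (hspan : ∀ x, Submodule.span ℂ (Set.range (φ x)) = ⊤)
    (hmub : ∀ x y, x ≠ y → ∀ a b,
      ‖(inner ℂ (φ x a) (φ y b) : ℂ)‖ = 1 / Real.sqrt d)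
    (L : ℕ) (q : Fin L → ℝ) (hq : ∀ l, 0 ≤ q l) (hq1 : ∑ l, q l = 1)
    (p : Fin L → Fin n → Fin d → ℝ) (hp : ∀ l x a, 0 ≤ p l x a)
    (hp1 : ∀ l x, ∑ a, p l x a = 1)
    (σl : Fin L → EuclideanSpace ℂ (Fin d) →L[ℂ] EuclideanSpace ℂ (Fin d))
    (hσlpos : ∀ l, (σl l).IsPositive) (hσltr : ∀ l, trCLM (σl l) = 1) :
    |∑ x, ∑ a, (trCLM (outer (φ x a) (φ x a) *
        (∑ l, ((q l * p l x a : ℝ) : ℂ) • σl l))).re| ≤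
      1 + ((n : ℝ) + 1) / Real.sqrt d := by
  classical
  have hR : ∀ (l : Fin L) x a, 0 ≤ ((inner ℂ (φ x a) (σl l (φ x a)) : ℂ)).re := by
    intro l x a
    have h := (hσlpos l).inner_nonneg_right (φ x a)
    exact (Complex.nonneg_iff.mp h).1
  have hterm : ∀ x a, (trCLM (outer (φ x a) (φ x a) *
        (∑ l, ((q l * p l x a : ℝ) : ℂ) • σl l))).re
      = ∑ l, q l * (p l x a * ((inner ℂ (φ x a) (σl l (φ x a)) : ℂ)).re) := by
    intro x a
    rw [tr_outer_mul, ContinuousLinearMap.sum_apply, inner_sum, Complex.re_sum]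
    refine Finset.sum_congr rfl fun l _ => ?_
    rw [ContinuousLinearMap.smul_apply, inner_smul_right, Complex.re_ofReal_mul]
    ring
  simp_rw [hterm]
  have hnn : 0 ≤ ∑ x, ∑ a, ∑ l,
      q l * (p l x a * ((inner ℂ (φ x a) (σl l (φ x a)) : ℂ)).re) := by
    refine Finset.sum_nonneg fun x _ => Finset.sum_nonneg fun a _ =>
      Finset.sum_nonneg fun l _ => ?_
    exact mul_nonneg (hq l) (mul_nonneg (hp l x a) (hR l x a))
  rw [abs_of_nonneg hnn]
  have hswap : ∑ x, ∑ a, ∑ l, q l * (p l x a * ((inner ℂ (φ x a) (σl l (φ x a)) : ℂ)).re)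
      = ∑ l, q l * ∑ x, ∑ a, p l x a * ((inner ℂ (φ x a) (σl l (φ x a)) : ℂ)).re := by
    have h1 : ∀ x : Fin n,
        ∑ a, ∑ l, q l * (p l x a * ((inner ℂ (φ x a) (σl l (φ x a)) : ℂ)).re)
        = ∑ l, ∑ a, q l * (p l x a * ((inner ℂ (φ x a) (σl l (φ x a)) : ℂ)).re) :=
      fun x => Finset.sum_comm
    simp_rw [h1]
    rw [Finset.sum_comm]
    refine Finset.sum_congr rfl fun l _ => ?_
    rw [Finset.mul_sum]
    exact Finset.sum_congr rfl fun x _ => by rw [Finset.mul_sum]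
  rw [hswap]
  have hbound : ∀ l : Fin L,
      ∑ x, ∑ a, p l x a * ((inner ℂ (φ x a) (σl l (φ x a)) : ℂ)).re
        ≤ 1 + (n : ℝ) / Real.sqrt d :=
    fun l => mixed_bound φ horth hmub (p l) (hp l) (hp1 l) (σl l) (hσlpos l) (hσltr l)
  calc ∑ l, q l * ∑ x, ∑ a, p l x a * ((inner ℂ (φ x a) (σl l (φ x a)) : ℂ)).re
      ≤ ∑ l, q l * (1 + (n : ℝ) / Real.sqrt d) := by
        refine Finset.sum_le_sum fun l _ => mul_le_mul_of_nonneg_left (hbound l) (hq l)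
    _ = 1 + (n : ℝ) / Real.sqrt d := by rw [← Finset.sum_mul, hq1, one_mul]
    _ ≤ 1 + ((n : ℝ) + 1) / Real.sqrt d := by
        refine add_le_add le_rfl ?_
        rcases eq_or_lt_of_le (Real.sqrt_nonneg d) with h | h
        · rw [← h, div_zero, div_zero]
        · exact (div_le_div_iff_of_pos_right h).mpr (by linarith)
end
end

section
/- Let A_1, ..., A_n be anticommuting self-adjoint operators on ℂ^{2^n} with A_x² = I, and set P_x^1 = (I + A_x)/2, P_x^2 = (I - A_x)/2, F_x^a = P_x^a - I/2. For any LHS assemblage σ in dimension 2^n, |Σ_{x=1}^n Σ_{a=1}^2 Tr(F_x^a σ_x^a)| ≤ sqrt(n/2). -/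
set_option maxHeartbeats 1000000
set_option synthInstance.maxHeartbeats 400000

noncomputable section

section Aux

variable {d : ℕ}

lemma trCLM_smul (c : ℂ) (T : EuclideanSpace ℂ (Fin d) →L[ℂ] EuclideanSpace ℂ (Fin d)) :
    trCLM (c • T) = c * trCLM T := by
  simp [trCLM, ContinuousLinearMap.coe_smul, smul_eq_mul]

lemma trCLM_sum {ι : Type*} (s : Finset ι)
    (T : ι → (EuclideanSpace ℂ (Fin d) →L[ℂ] EuclideanSpace ℂ (Fin d))) :
    trCLM (∑ i ∈ s, T i) = ∑ i ∈ s, trCLM (T i) := by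
  simp [trCLM, ContinuousLinearMap.coe_sum]

lemma trCLM_mul_sum {ι : Type*} (T : EuclideanSpace ℂ (Fin d) →L[ℂ] EuclideanSpace ℂ (Fin d))
    (s : Finset ι) (c : ι → ℂ)
    (σ : ι → (EuclideanSpace ℂ (Fin d) →L[ℂ] EuclideanSpace ℂ (Fin d))) :
    trCLM (T * ∑ i ∈ s, c i • σ i) = ∑ i ∈ s, c i * trCLM (T * σ i) := by
  rw [Finset.mul_sum, trCLM_sum]
  refine Finset.sum_congr rfl fun i _ => ?_
  rw [mul_smul_comm, trCLM_smul]

lemma trCLM_eq_sum_inner (T : EuclideanSpace ℂ (Fin d) →L[ℂ] EuclideanSpace ℂ (Fin d))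
    (b : OrthonormalBasis (Fin d) ℂ (EuclideanSpace ℂ (Fin d))) :
    trCLM T = ∑ i, (inner ℂ (b i) (T (b i)) : ℂ) := by
  rw [trCLM, LinearMap.trace_eq_matrix_trace ℂ b.toBasis, Matrix.trace]
  refine Finset.sum_congr rfl fun i _ => ?_
  rw [Matrix.diag_apply, LinearMap.toMatrix_apply, OrthonormalBasis.coe_toBasis_repr_apply,
    OrthonormalBasis.repr_apply_apply, OrthonormalBasis.coe_toBasis]
  rfl

/-- Trace bound: `|Re Tr(B σ)| ≤ M` for `‖B v‖ ≤ M‖v‖`, `σ` positive of trace 1. -/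
lemma trace_bound (M : ℝ) (B σ : EuclideanSpace ℂ (Fin d) →L[ℂ] EuclideanSpace ℂ (Fin d))
    (hB : ∀ v, ‖B v‖ ≤ M * ‖v‖) (hσ : σ.IsPositive) (htr : trCLM σ = 1) :
    |(trCLM (B * σ)).re| ≤ M := by
  have hsym : (σ : EuclideanSpace ℂ (Fin d) →ₗ[ℂ] EuclideanSpace ℂ (Fin d)).IsSymmetric :=
    hσ.1
  set b := hsym.eigenvectorBasis finrank_euclideanSpace_fin with hbdef
  set μ := hsym.eigenvalues finrank_euclideanSpace_fin with hμdef
  have hb : ∀ i, σ (b i) = (μ i : ℂ) • b i := fun i =>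
    hsym.apply_eigenvectorBasis finrank_euclideanSpace_fin i
  have hnorm : ∀ i, ‖b i‖ = 1 := fun i => b.orthonormal.1 i
  have hinner_self : ∀ i, (inner ℂ (b i) (b i) : ℂ) = 1 := by
    intro i
    rw [inner_self_eq_norm_sq_to_K, hnorm i]
    norm_num
  have hμ1 : ∑ i, μ i = 1 := by
    have h : trCLM σ = ∑ i, ((μ i : ℂ)) := by
      rw [trCLM_eq_sum_inner σ b]
      refine Finset.sum_congr rfl fun i _ => ?_
      rw [hb i, inner_smul_right, hinner_self i, mul_one]
    rw [htr] at h
    have := congrArg Complex.re h.symm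
    simpa using this
  have hμpos : ∀ i, 0 ≤ μ i := by
    intro i
    have h0 := hσ.2 (b i)
    have h1 : σ.reApplyInnerSelf (b i) = μ i := by
      rw [ContinuousLinearMap.reApplyInnerSelf_apply, hb i, inner_smul_left,
        hinner_self i, mul_one]
      simp
    linarith [h1 ▸ h0]
  have key : trCLM (B * σ) = ∑ i, (μ i : ℂ) * (inner ℂ (b i) (B (b i)) : ℂ) := by
    rw [trCLM_eq_sum_inner (B * σ) b]
    refine Finset.sum_congr rfl fun i _ => ?_
    rw [ContinuousLinearMap.mul_apply, hb i, map_smul, inner_smul_right]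
  have hM : 0 ≤ M := by
    rcases isEmpty_or_nonempty (EuclideanSpace ℂ (Fin d)) with h | h
    · -- dimension 0 : trace of σ is 0, contradiction with htr... handle via μ sum
      have : ∑ i, μ i = 1 := hμ1
      -- if d = 0 the sum is empty; but we can get M ≥ 0 from some vector only if one exists.
      -- Instead: b i exists only if d > 0; if d = 0 then Fin d empty and sum = 0 ≠ 1.
      have hd : (Finset.univ : Finset (Fin d)).Nonempty := by
        by_contra hne
        rw [Finset.not_nonempty_iff_eq_empty] at hne
        rw [hne] at this
        simp at this
      obtain ⟨i, _⟩ := hd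
      have := hB (b i)
      rw [hnorm i, mul_one] at this
      exact le_trans (norm_nonneg _) this
    · obtain ⟨v⟩ := h
      rcases eq_or_ne v 0 with rfl | hv
      · -- use basis vector if exists, else fall back: d could be 0
        by_cases hd : (Finset.univ : Finset (Fin d)).Nonempty
        · obtain ⟨i, _⟩ := hd
          have := hB (b i)
          rw [hnorm i, mul_one] at this
          exact le_trans (norm_nonneg _) this
        · rw [Finset.not_nonempty_iff_eq_empty] at hd
          rw [hd] at hμ1
          simp at hμ1
      · have := hB v
        nlinarith [norm_nonneg (B v), norm_pos_iff.mpr hv, norm_nonneg v]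
  have hterm : ∀ i, |(inner ℂ (b i) (B (b i)) : ℂ).re| ≤ M := by
    intro i
    calc |(inner ℂ (b i) (B (b i)) : ℂ).re| ≤ ‖(inner ℂ (b i) (B (b i)) : ℂ)‖ :=
          Complex.abs_re_le_norm _
      _ ≤ ‖b i‖ * ‖B (b i)‖ := norm_inner_le_norm _ _
      _ ≤ 1 * (M * 1) := by
          rw [hnorm i, one_mul]
          have h := hB (b i); rw [hnorm i] at h
          simpa using h
      _ = M := by ring
  calc |(trCLM (B * σ)).re| = |∑ i, μ i * (inner ℂ (b i) (B (b i)) : ℂ).re| := by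
        rw [key, Complex.re_sum]
        congr 1
        refine Finset.sum_congr rfl fun i _ => ?_
        rw [Complex.re_ofReal_mul]
    _ ≤ ∑ i, |μ i * (inner ℂ (b i) (B (b i)) : ℂ).re| := Finset.abs_sum_le_sum_abs _ _
    _ ≤ ∑ i, μ i * M := by
        refine Finset.sum_le_sum fun i _ => ?_
        rw [abs_mul, abs_of_nonneg (hμpos i)]
        exact mul_le_mul_of_nonneg_left (hterm i) (hμpos i)
    _ = M := by rw [← Finset.sum_mul, hμ1, one_mul]

end Aux

/-- Norm bound for real combinations of anticommuting observables. -/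
lemma anticomm_norm_bound (n : ℕ)
    (A : Fin n → EuclideanSpace ℂ (Fin (2 ^ n)) →L[ℂ] EuclideanSpace ℂ (Fin (2 ^ n)))
    (hsa : ∀ i, IsSelfAdjoint (A i))
    (hacr : ∀ i j, A i * A j + A j * A i =
      if i = j then (2 : ℂ) • (1 : EuclideanSpace ℂ (Fin (2 ^ n)) →L[ℂ]
        EuclideanSpace ℂ (Fin (2 ^ n))) else 0)
    (c : Fin n → ℝ) (hc : ∀ x, |c x| ≤ 1 / 2) (v : EuclideanSpace ℂ (Fin (2 ^ n))) :
    ‖(∑ x, (c x : ℂ) • A x) v‖ ≤ Real.sqrt ((n : ℝ) / 2) * ‖v‖ := by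
  set B := ∑ x, (c x : ℂ) • A x with hBdef
  have e1 : B * B = ∑ x, ∑ y, ((c x : ℂ) * (c y : ℂ)) • (A x * A y) := by
    rw [hBdef, Finset.sum_mul_sum]
    refine Finset.sum_congr rfl fun x _ => Finset.sum_congr rfl fun y _ => ?_
    rw [smul_mul_assoc, mul_smul_comm, smul_smul]
  have e2 : B * B = ∑ x, ∑ y, ((c x : ℂ) * (c y : ℂ)) • (A y * A x) := by
    rw [e1, Finset.sum_comm]
    refine Finset.sum_congr rfl fun x _ => Finset.sum_congr rfl fun y _ => ?_
    rw [mul_comm ((c y : ℂ)) ((c x : ℂ))]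
  have hBB : B * B = ((∑ x, c x ^ 2 : ℝ) : ℂ) • 1 := by
    have lhs : (2 : ℂ) • (B * B) =
        ∑ x, ∑ y, ((c x : ℂ) * (c y : ℂ)) • (A x * A y + A y * A x) := by
      rw [two_smul ℂ (B * B)]
      nth_rewrite 1 [e1]
      nth_rewrite 1 [e2]
      rw [← Finset.sum_add_distrib]
      refine Finset.sum_congr rfl fun x _ => ?_
      rw [← Finset.sum_add_distrib]
      refine Finset.sum_congr rfl fun y _ => ?_
      rw [smul_add]
    have h2 : (2 : ℂ) • (B * B) = (2 : ℂ) • (((∑ x, c x ^ 2 : ℝ) : ℂ) • 1) := by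
      rw [lhs]
      have step : ∀ x : Fin n, ∑ y, ((c x : ℂ) * (c y : ℂ)) • (A x * A y + A y * A x)
          = ((2 : ℂ) * (c x : ℂ) ^ 2) • (1 : EuclideanSpace ℂ (Fin (2 ^ n)) →L[ℂ]
            EuclideanSpace ℂ (Fin (2 ^ n))) := by
        intro x
        rw [Finset.sum_eq_single x]
        · rw [hacr x x, if_pos rfl, smul_smul]
          congr 1; ring
        · intro y _ hy
          rw [hacr x y, if_neg (Ne.symm hy)]
          ext w
          rw [ContinuousLinearMap.smul_apply, ContinuousLinearMap.zero_apply, smul_zero]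
        · intro h; exact absurd (Finset.mem_univ x) h
      rw [Finset.sum_congr rfl (fun x _ => step x), ← Finset.sum_smul, smul_smul]
      congr 1
      rw [← Finset.mul_sum]
      push_cast
      ring
    calc B * B = (2 : ℂ)⁻¹ • ((2 : ℂ) • (B * B)) := by
          rw [inv_smul_smul₀ two_ne_zero]
      _ = (2 : ℂ)⁻¹ • ((2 : ℂ) • (((∑ x, c x ^ 2 : ℝ) : ℂ) • 1)) := by rw [h2]
      _ = ((∑ x, c x ^ 2 : ℝ) : ℂ) • 1 := by rw [inv_smul_smul₀ two_ne_zero]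
  have hBsym : ∀ w u : EuclideanSpace ℂ (Fin (2 ^ n)),
      (inner ℂ (B w) u : ℂ) = inner ℂ w (B u) := by
    intro w u
    rw [hBdef]
    simp only [ContinuousLinearMap.sum_apply, ContinuousLinearMap.coe_smul', Pi.smul_apply,
      sum_inner, inner_sum, inner_smul_left, inner_smul_right]
    refine Finset.sum_congr rfl fun x _ => ?_
    rw [Complex.conj_ofReal]
    exact congrArg (((c x : ℂ)) * ·) ((hsa x).isSymmetric w u)
  have hsq : ‖B v‖ ^ 2 = (∑ x, c x ^ 2) * ‖v‖ ^ 2 := by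
    have h1 : (inner ℂ (B v) (B v) : ℂ) = inner ℂ v ((B * B) v) := by
      rw [ContinuousLinearMap.mul_apply]
      exact hBsym v (B v)
    rw [hBB, ContinuousLinearMap.smul_apply, inner_smul_right,
      ContinuousLinearMap.one_apply, inner_self_eq_norm_sq_to_K,
      inner_self_eq_norm_sq_to_K] at h1
    have h2 : ((‖B v‖ ^ 2 : ℝ) : ℂ) = (((∑ x, c x ^ 2) * ‖v‖ ^ 2 : ℝ) : ℂ) := by
      push_cast
      exact h1.trans (by push_cast; rfl)
    exact Complex.ofReal_injective h2
  have hle : ‖B v‖ ^ 2 ≤ ((n : ℝ) / 2) * ‖v‖ ^ 2 := by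
    have hcs : ∑ x, c x ^ 2 ≤ (n : ℝ) / 2 := by
      calc ∑ x, c x ^ 2 ≤ ∑ _x : Fin n, (1 / 4 : ℝ) := by
            refine Finset.sum_le_sum fun x _ => ?_
            calc c x ^ 2 = |c x| ^ 2 := (sq_abs _).symm
              _ ≤ (1 / 2 : ℝ) ^ 2 := pow_le_pow_left₀ (abs_nonneg _) (hc x) 2
              _ = 1 / 4 := by norm_num
        _ = (n : ℝ) / 4 := by
            rw [Finset.sum_const, Finset.card_univ, Fintype.card_fin, nsmul_eq_mul]; ring
        _ ≤ (n : ℝ) / 2 := by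
            have : (0:ℝ) ≤ (n:ℝ) := Nat.cast_nonneg n
            linarith
    rw [hsq]
    exact mul_le_mul_of_nonneg_right hcs (sq_nonneg _)
  calc ‖B v‖ = Real.sqrt (‖B v‖ ^ 2) := (Real.sqrt_sq (norm_nonneg _)).symm
    _ ≤ Real.sqrt (((n : ℝ) / 2) * ‖v‖ ^ 2) := Real.sqrt_le_sqrt hle
    _ = Real.sqrt ((n : ℝ) / 2) * ‖v‖ := by
        rw [Real.sqrt_mul (by positivity), Real.sqrt_sq (norm_nonneg _)]

/-- For anticommuting self-adjoint operators `A x` on `ℂ^{2^n}` with `A x ^ 2 = 1`,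
with `P x 1 = (1 + A x)/2`, `P x 2 = (1 - A x)/2`, `F x a = P x a - 1/2`, and for any LHS
assemblage `σ x a = ∑ λ, q λ * p λ (a|x) • σl λ` in dimension `2^n`,
`|∑ x ∑ a Tr(F x a * σ x a)| ≤ √(n/2)`. -/
theorem dichotomic_lhs_bound (n : ℕ)
    (A : Fin n → EuclideanSpace ℂ (Fin (2 ^ n)) →L[ℂ] EuclideanSpace ℂ (Fin (2 ^ n)))
    (hsa : ∀ i, IsSelfAdjoint (A i))
    (hacr : ∀ i j, A i * A j + A j * A i =
      if i = j then (2 : ℂ) • (1 : EuclideanSpace ℂ (Fin (2 ^ n)) →L[ℂ]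
        EuclideanSpace ℂ (Fin (2 ^ n))) else 0)
    (L : ℕ) (q : Fin L → ℝ) (hq : ∀ l, 0 ≤ q l) (hq1 : ∑ l, q l = 1)
    (p : Fin L → Fin n → Fin 2 → ℝ) (hp : ∀ l x a, 0 ≤ p l x a)
    (hp1 : ∀ l x, ∑ a, p l x a = 1)
    (σl : Fin L → EuclideanSpace ℂ (Fin (2 ^ n)) →L[ℂ] EuclideanSpace ℂ (Fin (2 ^ n)))
    (hσlpos : ∀ l, (σl l).IsPositive) (hσltr : ∀ l, trCLM (σl l) = 1) :
    |∑ x, ∑ a : Fin 2,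
        (trCLM (((if a = 0 then (2 : ℂ)⁻¹ • (1 + A x) else (2 : ℂ)⁻¹ • (1 - A x)) -
            (2 : ℂ)⁻¹ • 1) *
          (∑ l, ((q l * p l x a : ℝ) : ℂ) • σl l))).re| ≤ Real.sqrt ((n : ℝ) / 2) := by
  set c : Fin L → Fin n → ℝ := fun l x => (p l x 0 - p l x 1) / 2 with hcdef
  have hc : ∀ l x, |c l x| ≤ 1 / 2 := by
    intro l x
    have h1 := hp1 l x
    rw [Fin.sum_univ_two] at h1
    have h2 := hp l x 0
    have h3 := hp l x 1
    rw [abs_le]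
    constructor <;> (simp only [hcdef]; linarith)
  -- complex-level identity
  have hF0 : ∀ x : Fin n, (2 : ℂ)⁻¹ • (1 + A x) - (2 : ℂ)⁻¹ • 1 = (2 : ℂ)⁻¹ • A x := by
    intro x; module
  have hF1 : ∀ x : Fin n, (2 : ℂ)⁻¹ • (1 - A x) - (2 : ℂ)⁻¹ • 1 = (-(2 : ℂ)⁻¹) • A x := by
    intro x; module
  have hC : ∑ x, ∑ a : Fin 2,
      trCLM (((if a = 0 then (2 : ℂ)⁻¹ • (1 + A x) else (2 : ℂ)⁻¹ • (1 - A x)) -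
          (2 : ℂ)⁻¹ • 1) * (∑ l, ((q l * p l x a : ℝ) : ℂ) • σl l))
      = ∑ l, ((q l : ℝ) : ℂ) * trCLM ((∑ x, ((c l x : ℝ) : ℂ) • A x) * σl l) := by
    have key : ∀ l, trCLM ((∑ x, ((c l x : ℝ) : ℂ) • A x) * σl l)
        = ∑ x, ((c l x : ℝ) : ℂ) * trCLM (A x * σl l) := by
      intro l
      rw [Finset.sum_mul, trCLM_sum]
      refine Finset.sum_congr rfl fun x _ => ?_
      rw [smul_mul_assoc, trCLM_smul]
    calc ∑ x, ∑ a : Fin 2,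
        trCLM (((if a = 0 then (2 : ℂ)⁻¹ • (1 + A x) else (2 : ℂ)⁻¹ • (1 - A x)) -
            (2 : ℂ)⁻¹ • 1) * (∑ l, ((q l * p l x a : ℝ) : ℂ) • σl l))
        = ∑ x, ∑ l, (((q l : ℝ) : ℂ) * ((c l x : ℝ) : ℂ)) * trCLM (A x * σl l) := by
          refine Finset.sum_congr rfl fun x _ => ?_
          rw [Fin.sum_univ_two, if_pos rfl, if_neg (by decide), hF0 x, hF1 x,
            trCLM_mul_sum, trCLM_mul_sum, ← Finset.sum_add_distrib]
          refine Finset.sum_congr rfl fun l _ => ?_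
          rw [smul_mul_assoc, smul_mul_assoc, trCLM_smul, trCLM_smul]
          simp only [hcdef]
          push_cast
          ring
      _ = ∑ l, ∑ x, (((q l : ℝ) : ℂ) * ((c l x : ℝ) : ℂ)) * trCLM (A x * σl l) :=
          Finset.sum_comm
      _ = ∑ l, ((q l : ℝ) : ℂ) * trCLM ((∑ x, ((c l x : ℝ) : ℂ) • A x) * σl l) := by
          refine Finset.sum_congr rfl fun l _ => ?_
          rw [key l, Finset.mul_sum]
          refine Finset.sum_congr rfl fun x _ => ?_
          ring
  have hre : ∑ x, ∑ a : Fin 2,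
      (trCLM (((if a = 0 then (2 : ℂ)⁻¹ • (1 + A x) else (2 : ℂ)⁻¹ • (1 - A x)) -
          (2 : ℂ)⁻¹ • 1) * (∑ l, ((q l * p l x a : ℝ) : ℂ) • σl l))).re
      = ∑ l, q l * (trCLM ((∑ x, ((c l x : ℝ) : ℂ) • A x) * σl l)).re := by
    calc ∑ x, ∑ a : Fin 2,
        (trCLM (((if a = 0 then (2 : ℂ)⁻¹ • (1 + A x) else (2 : ℂ)⁻¹ • (1 - A x)) -
            (2 : ℂ)⁻¹ • 1) * (∑ l, ((q l * p l x a : ℝ) : ℂ) • σl l))).re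
        = (∑ x, ∑ a : Fin 2,
          trCLM (((if a = 0 then (2 : ℂ)⁻¹ • (1 + A x) else (2 : ℂ)⁻¹ • (1 - A x)) -
              (2 : ℂ)⁻¹ • 1) * (∑ l, ((q l * p l x a : ℝ) : ℂ) • σl l))).re := by
          rw [Complex.re_sum]
          exact Finset.sum_congr rfl fun x _ => (Complex.re_sum _ _).symm
      _ = (∑ l, ((q l : ℝ) : ℂ) * trCLM ((∑ x, ((c l x : ℝ) : ℂ) • A x) * σl l)).re := by
          rw [hC]
      _ = ∑ l, q l * (trCLM ((∑ x, ((c l x : ℝ) : ℂ) • A x) * σl l)).re := by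
          rw [Complex.re_sum]
          exact Finset.sum_congr rfl fun l _ => Complex.re_ofReal_mul _ _
  rw [hre]
  calc |∑ l, q l * (trCLM ((∑ x, ((c l x : ℝ) : ℂ) • A x) * σl l)).re|
      ≤ ∑ l, |q l * (trCLM ((∑ x, ((c l x : ℝ) : ℂ) • A x) * σl l)).re| :=
        Finset.abs_sum_le_sum_abs _ _
    _ ≤ ∑ l, q l * Real.sqrt ((n : ℝ) / 2) := by
        refine Finset.sum_le_sum fun l _ => ?_
        rw [abs_mul, abs_of_nonneg (hq l)]
        refine mul_le_mul_of_nonneg_left ?_ (hq l)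
        exact trace_bound _ _ _
          (anticomm_norm_bound n A hsa hacr (c l) (hc l)) (hσlpos l) (hσltr l)
    _ = Real.sqrt ((n : ℝ) / 2) := by rw [← Finset.sum_mul, hq1, one_mul]
end
end
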